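/- arXiv:1601.03122 — 3 statements merged into one kernel-verified Lean document; each statement's English description precedes it below -/
import Mathlib

section
/- Let η ∈ ℝ, let k_1, …, k_n ∈ ℂ satisfy Im k_j > η for all j, and define B(k) = ∏_{j=1}^n (k − k_j)/(k − conj(k_j) − 2iη) and, for k with |k − iη| large, log B(k) = ∑_{j=1}^n Log((k − k_j)/(k − conj(k_j) − 2iη)), where Log is the principal branch of the logarithm (each factor tends to 1 as |k| → ∞, so this is well defined for |k − iη| sufficiently large). Then there exist constants C > 0 and R₀ > max_j |k_j − iη| such that for all R ≥ R₀, | ∫₀^π log B(iη + Re^{iθ}) · iRe^{iθ} dθ + 2π ∑_{j=1}^n (η − Im k_j) | ≤ C/R. In other words, the integral of log B over the counterclockwise semicircle {k : |k − iη| = R, Im k > η} equals −2π ∑_j (η − Im k_j) + O(R^{-1}) as R → ∞. -/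
/-!
Writing `k = iη + w` and `u_j = k_j - iη`, the `j`-th Blaschke factor is
`(w - u_j)/(w - conj u_j)`. For `|w| = R` large, `(w - u)/(w - v) = 1 + ζ` with
`ζ = (v - u)/(w - v) = O(1/R)`, and `Log(1 + ζ) = ζ + O(ζ²)` gives
`w · Log((w - u)/(w - v)) = v - u + O(1/R)`. So along the semicircle the integrand is the constant `i ∑_j (conj u_j - u_j)` up to `O(1/R)`,
and `π i (conj u_j - u_j) = 2π Im u_j = -2π (η - Im k_j)`.
-/

open Complex

/-- The branch of `log B` given by summing principal logarithms of the Blaschke factors: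
`log B(k) = ∑_j Log((k - k_j)/(k - conj(k_j) - 2iη))`. -/
noncomputable def logBlaschke (η : ℝ) (n : ℕ) (k : Fin n → ℂ) (z : ℂ) : ℂ :=
  ∑ j, Complex.log ((z - k j) / (z - (starRingEnd ℂ) (k j) - 2 * Complex.I * (η : ℂ)))

open ComplexConjugate

theorem Complex.norm_log_one_add_sub_self_le_sq {z : ℂ} (hz : ‖z‖ ≤ 1 / 2) :
    ‖log (1 + z) - z‖ ≤ ‖z‖ ^ 2 := by
  have h_inv : (1 - ‖z‖)⁻¹ ≤ 2 := by
    rw [inv_le_comm₀ (by linarith) two_pos]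
    linarith
  calc ‖log (1 + z) - z‖ ≤ ‖z‖ ^ 2 * (1 - ‖z‖)⁻¹ / 2 :=
        norm_log_one_add_sub_self_le (by linarith)
    _ ≤ ‖z‖ ^ 2 * 2 / 2 := by gcongr
    _ = ‖z‖ ^ 2 := by ring

theorem norm_mul_log_div_sub_sub_le {u v w : ℂ} {M : ℝ} (hu : ‖u‖ ≤ M) (hv : ‖v‖ ≤ M) (hw : 8 * M ≤ ‖w‖)
    (hw0 : w ≠ 0) :
    ‖w * log ((w - u) / (w - v)) - (v - u)‖ ≤ 20 * M ^ 2 / ‖w‖ := by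
  have hw_pos : 0 < ‖w‖ := norm_pos_iff.mpr hw0
  have hwv : ‖w‖ / 2 ≤ ‖w - v‖ := by linarith [norm_sub_norm_le w v]
  have hwv0 : w - v ≠ 0 := norm_pos_iff.mp (by linarith)
  have hvu : ‖v - u‖ ≤ 2 * M := (norm_sub_le v u).trans (by linarith)
  set ζ := (v - u) / (w - v) with hζ
  have hζ_le : ‖ζ‖ ≤ 4 * M / ‖w‖ := by
    rw [norm_div, div_le_div_iff₀ (by linarith) hw_pos]
    nlinarith [norm_nonneg (v - u)]
  have hζ_half : ‖ζ‖ ≤ 1 / 2 :=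
    hζ_le.trans ((div_le_iff₀ hw_pos).mpr (by linarith))
  have h_ratio : (w - u) / (w - v) = 1 + ζ := by
    rw [hζ]
    field_simp
    ring
  have h_split : w * log (1 + ζ) - (v - u) = w * (log (1 + ζ) - ζ) + ζ * v := by
    have : w * ζ - (v - u) = ζ * v := by
      rw [hζ]
      field_simp
      ring
    linear_combination this
  have hM : 0 ≤ M := (norm_nonneg u).trans hu
  calc ‖w * log ((w - u) / (w - v)) - (v - u)‖
      ≤ ‖w‖ * ‖ζ‖ ^ 2 + ‖ζ‖ * M := by
        rw [h_ratio, h_split]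
        refine (norm_add_le _ _).trans ?_
        rw [norm_mul, norm_mul]
        gcongr
        exact norm_log_one_add_sub_self_le_sq hζ_half
    _ ≤ ‖w‖ * (4 * M / ‖w‖) ^ 2 + 4 * M / ‖w‖ * M := by gcongr
    _ = 20 * M ^ 2 / ‖w‖ := by field_simp; ring

section SemicircleIntegral

variable {ι : Type*} (s : Finset ι) {u v : ι → ℂ} {w : ℂ} {M : ℝ}

theorem norm_sum_log_div_mul_sub_le (hu : ∀ j ∈ s, ‖u j‖ ≤ M) (hv : ∀ j ∈ s, ‖v j‖ ≤ M)
    (hw : 8 * M ≤ ‖w‖) (hw0 : w ≠ 0) :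
    ‖(∑ j ∈ s, log ((w - u j) / (w - v j))) * (w * I) - (∑ j ∈ s, (v j - u j)) * I‖ ≤
      s.card * (20 * M ^ 2 / ‖w‖) := by
  have h_eq : (∑ j ∈ s, log ((w - u j) / (w - v j))) * (w * I) - (∑ j ∈ s, (v j - u j)) * I =
      (∑ j ∈ s, (w * log ((w - u j) / (w - v j)) - (v j - u j))) * I := by
    rw [Finset.sum_mul, Finset.sum_mul, Finset.sum_mul, ← Finset.sum_sub_distrib]
    exact Finset.sum_congr rfl fun j _ => by ring
  rw [h_eq, norm_mul, norm_I, mul_one, ← nsmul_eq_mul, ← Finset.sum_const]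
  exact norm_sum_le_of_le s fun j hj => norm_mul_log_div_sub_sub_le (hu j hj) (hv j hj) hw hw0

theorem norm_integral_circleMap_sum_log_div_sub_le (hu : ∀ j ∈ s, ‖u j‖ ≤ M)
    (hv : ∀ j ∈ s, ‖v j‖ ≤ M) {R : ℝ} (hR : 8 * M ≤ R) (hR0 : 0 < R) (a b : ℝ) :
    ‖(∫ θ in a..b, (∑ j ∈ s, log ((circleMap 0 R θ - u j) / (circleMap 0 R θ - v j))) *
        (circleMap 0 R θ * I)) - ((b - a : ℝ) : ℂ) * ((∑ j ∈ s, (v j - u j)) * I)‖ ≤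
      |b - a| * (s.card * (20 * M ^ 2 / R)) := by
  set F : ℝ → ℂ := fun θ =>
    (∑ j ∈ s, log ((circleMap 0 R θ - u j) / (circleMap 0 R θ - v j))) * (circleMap 0 R θ * I)
  set c : ℂ := (∑ j ∈ s, (v j - u j)) * I
  set K : ℝ := s.card * (20 * M ^ 2 / R)
  have h_norm (θ : ℝ) : ‖circleMap 0 R θ‖ = R := by rw [norm_circleMap_zero, abs_of_pos hR0]
  have h_bound (θ : ℝ) : ‖F θ - c‖ ≤ K := by
    simpa only [h_norm] using norm_sum_log_div_mul_sub_le s hu hv (by rwa [h_norm])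
      (circleMap_ne_center hR0.ne' (θ := θ))
  have hF_meas : Measurable F := by fun_prop
  have hF : IntervalIntegrable F MeasureTheory.volume a b :=
    (intervalIntegrable_const (c := K + ‖c‖)).mono_fun' hF_meas.aestronglyMeasurable
      (MeasureTheory.ae_of_all _ fun θ => by
        linarith [norm_le_norm_add_norm_sub' (F θ) c, h_bound θ])
  calc ‖(∫ θ in a..b, F θ) - ((b - a : ℝ) : ℂ) * c‖ = ‖∫ θ in a..b, (F θ - c)‖ := by
        rw [intervalIntegral.integral_sub hF intervalIntegrable_const,
          intervalIntegral.integral_const, real_smul]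
    _ ≤ K * |b - a| := intervalIntegral.norm_integral_le_of_norm_le_const fun θ _ => h_bound θ
    _ = |b - a| * K := mul_comm _ _

end SemicircleIntegral

theorem logBlaschke_I_mul_add (η : ℝ) (n : ℕ) (k : Fin n → ℂ) (w : ℂ) :
    logBlaschke η n k (I * η + w) =
      ∑ j, log ((w - (k j - I * η)) / (w - conj (k j - I * η))) := by
  refine Finset.sum_congr rfl fun j _ => ?_
  rw [map_sub, map_mul, conj_I, conj_ofReal]
  ring_nf

theorem conj_sub_self_mul_I (z : ℂ) : (conj z - z) * I = 2 * z.im := by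
  rw [← neg_sub, sub_conj, neg_mul, mul_assoc, I_mul_I]
  push_cast
  ring

theorem integral_logBlaschke_semicircle_general (η : ℝ) (n : ℕ) (k : Fin n → ℂ) :
    ∃ C > (0 : ℝ), ∃ R₀ : ℝ, 0 < R₀ ∧ (∀ j, ‖k j - Complex.I * (η : ℂ)‖ < R₀) ∧
      ∀ R : ℝ, R₀ ≤ R →
        ‖
            (∫ θ in (0 : ℝ)..Real.pi,
                logBlaschke η n k (Complex.I * (η : ℂ) + (R : ℂ) * Complex.exp (Complex.I * (θ : ℂ))) *
                  (Complex.I * (R : ℂ) * Complex.exp (Complex.I * (θ : ℂ)))) +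
              2 * (Real.pi : ℂ) * ∑ j, ((η : ℂ) - (((k j).im : ℝ) : ℂ))‖ ≤ C / R := by
  set u : Fin n → ℂ := fun j => k j - I * η
  set M : ℝ := ∑ j, ‖u j‖
  have hu (j : Fin n) : ‖u j‖ ≤ M :=
    Finset.single_le_sum (f := fun j => ‖u j‖) (fun _ _ => norm_nonneg _) (Finset.mem_univ j)
  have hM : 0 ≤ M := Finset.sum_nonneg fun _ _ => norm_nonneg _
  refine ⟨20 * Real.pi * n * M ^ 2 + 1, by positivity, 8 * M + 1, by positivity,
    fun j => (hu j).trans_lt (by linarith), fun R hR => ?_⟩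
  have hR0 : 0 < R := by linarith
  have h_const : 2 * (Real.pi : ℂ) * ∑ j, ((η : ℂ) - (((k j).im : ℝ) : ℂ)) =
      -((Real.pi : ℂ) * ((∑ j, (conj (u j) - u j)) * I)) := by
    simp only [Finset.sum_mul, conj_sub_self_mul_I, Finset.mul_sum, u, sub_im, mul_im, I_re,
      I_im, ofReal_re, ofReal_im]
    push_cast
    rw [← Finset.sum_neg_distrib]
    exact Finset.sum_congr rfl fun j _ => by ring
  have h_integrand : (fun θ : ℝ => logBlaschke η n k (I * η + R * exp (I * θ)) *
      (I * R * exp (I * θ))) = fun θ => (∑ j, log ((circleMap 0 R θ - u j) /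
        (circleMap 0 R θ - conj (u j)))) * (circleMap 0 R θ * I) := by
    ext θ
    rw [logBlaschke_I_mul_add]
    simp only [circleMap, zero_add, mul_comm (θ : ℂ) I, u]
    ring
  have h_arc := norm_integral_circleMap_sum_log_div_sub_le Finset.univ (fun j _ => hu j)
    (fun j _ => (norm_conj (u j)).trans_le (hu j)) (by linarith) hR0 0 Real.pi
  rw [sub_zero, abs_of_pos Real.pi_pos, Finset.card_univ, Fintype.card_fin, ← h_integrand,
    sub_eq_add_neg, ← h_const] at h_arc
  refine h_arc.trans ?_
  calc Real.pi * (n * (20 * M ^ 2 / R)) = 20 * Real.pi * n * M ^ 2 / R := by ring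
    _ ≤ (20 * Real.pi * n * M ^ 2 + 1) / R := by gcongr; linarith

/-- The integral of `log B` over the counterclockwise semicircle
`{k : |k - iη| = R, Im k > η}` equals `-2π ∑_j (η - Im k_j) + O(R⁻¹)` as `R → ∞`. -/
theorem integral_logBlaschke_semicircle (η : ℝ) (n : ℕ) (k : Fin n → ℂ)
    (hk : ∀ j, η < (k j).im) :
    ∃ C > (0 : ℝ), ∃ R₀ : ℝ, 0 < R₀ ∧ (∀ j, ‖k j - Complex.I * (η : ℂ)‖ < R₀) ∧
      ∀ R : ℝ, R₀ ≤ R →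
        ‖
            (∫ θ in (0 : ℝ)..Real.pi,
                logBlaschke η n k (Complex.I * (η : ℂ) + (R : ℂ) * Complex.exp (Complex.I * (θ : ℂ))) *
                  (Complex.I * (R : ℂ) * Complex.exp (Complex.I * (θ : ℂ)))) +
              2 * (Real.pi : ℂ) * ∑ j, ((η : ℂ) - (((k j).im : ℝ) : ℂ))‖ ≤ C / R :=
  integral_logBlaschke_semicircle_general η n k
end

section
/- Let n ∈ ℕ with n ≥ 1 and let p be a real number with n − 1 ≤ p ≤ n and p > 0. Then there exists a constant Γ ≥ 0 such that for every z ∈ ℂ, |(1 + z) exp(∑_{m=1}^{n−1} ((−1)^m / m) z^m)| ≤ exp(Γ |z|^p). -/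
/-!
For `‖z‖ ≤ 1/2` the factor equals `exp (log (1 + z) - logTaylor n z)`, and the Taylor remainder
of the logarithm is `O(‖z‖ ^ n)`, hence `O(‖z‖ ^ p)` since `p ≤ n` and `‖z‖ ≤ 1`. For
`‖z‖ ≥ 1/2` no cancellation is needed: `log (1 + ‖z‖)` is `O(‖z‖ ^ p)` for every `p > 0`, and
each `‖z‖ ^ m` with `m ≤ n - 1 ≤ p` is `O(‖z‖ ^ p)` because `‖z‖` is bounded away from `0`.
-/

open Finset Complex

lemma sum_Icc_neg_one_pow_div_mul_pow_eq_neg_logTaylor (n : ℕ) (z : ℂ) :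
    ∑ m ∈ Icc 1 (n - 1), ((-1 : ℂ) ^ m / m) * z ^ m = -logTaylor n z := by
  rcases n with _ | n
  · simp [logTaylor]
  · rw [logTaylor, sum_range_eq_add_Ico _ n.succ_pos, Nat.add_sub_cancel,
      ← Finset.Ico_add_one_right_eq_Icc]
    simp only [CharP.cast_eq_zero, div_zero, zero_add, ← sum_neg_distrib]
    exact sum_congr rfl fun m _ => by ring

lemma norm_one_add_mul_exp_neg_logTaylor_le_of_norm_le_half (n : ℕ) {z : ℂ}
    (hz : ‖z‖ ≤ 1 / 2) :
    ‖(1 + z) * exp (-logTaylor (n + 1) z)‖ ≤ Real.exp (2 * ‖z‖ ^ (n + 1)) := by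
  have hz1 : ‖z‖ < 1 := by linarith
  have hz0 : 1 + z ≠ 0 := by
    intro h
    simp [eq_neg_of_add_eq_zero_right h] at hz1
  rw [← exp_log hz0, ← exp_add, ← sub_eq_add_neg]
  refine (norm_exp_le_exp_norm _).trans (Real.exp_le_exp.mpr ?_)
  calc ‖log (1 + z) - logTaylor (n + 1) z‖
      ≤ ‖z‖ ^ (n + 1) * (1 - ‖z‖)⁻¹ / (n + 1) := norm_log_sub_logTaylor_le n hz1
    _ ≤ ‖z‖ ^ (n + 1) * 2 / 1 := by
        gcongr
        · rw [inv_le_comm₀ (by linarith) two_pos]; linarith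
        · linarith [n.cast_nonneg (α := ℝ)]
    _ = 2 * ‖z‖ ^ (n + 1) := by ring

lemma norm_sum_Icc_neg_one_pow_div_mul_pow_le (n : ℕ) (z : ℂ) :
    ‖∑ m ∈ Icc 1 n, ((-1 : ℂ) ^ m / m) * z ^ m‖ ≤ ∑ m ∈ Icc 1 n, ‖z‖ ^ m := by
  refine (norm_sum_le _ _).trans (sum_le_sum fun m hm => ?_)
  have hm : (1 : ℝ) ≤ m := by exact_mod_cast (mem_Icc.mp hm).1
  rw [norm_mul, norm_div, norm_pow, norm_pow, norm_neg, norm_one, one_pow, norm_natCast]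
  exact mul_le_of_le_one_left (by positivity) ((div_le_one (by linarith)).mpr hm)

lemma pow_le_two_rpow_mul_rpow {t p : ℝ} {m : ℕ} (ht : 1 / 2 ≤ t) (hm : (m : ℝ) ≤ p) :
    t ^ m ≤ 2 ^ p * t ^ p := by
  calc t ^ m ≤ (2 * t) ^ m := by gcongr; linarith
    _ = (2 * t) ^ (m : ℝ) := (Real.rpow_natCast _ m).symm
    _ ≤ (2 * t) ^ p := Real.rpow_le_rpow_of_exponent_le (by linarith) hm
    _ = 2 ^ p * t ^ p := Real.mul_rpow zero_le_two (by linarith)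

lemma log_one_add_le_rpow {t p : ℝ} (ht : 1 / 2 ≤ t) (hp : 0 < p) :
    Real.log (1 + t) ≤ 3 ^ p / p * t ^ p := by
  calc Real.log (1 + t) ≤ Real.log (3 * t) := Real.log_le_log (by linarith) (by linarith)
    _ ≤ (3 * t) ^ p / p := Real.log_le_rpow_div (by linarith) hp
    _ = 3 ^ p / p * t ^ p := by rw [Real.mul_rpow zero_le_three (by linarith)]; ring

lemma norm_one_add_mul_exp_sum_Icc_le_of_half_le_norm {n : ℕ} {p : ℝ} (hp0 : 0 < p)
    (hp : (n : ℝ) ≤ p) {z : ℂ} (hz : 1 / 2 ≤ ‖z‖) :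
    ‖(1 + z) * exp (∑ m ∈ Icc 1 n, ((-1 : ℂ) ^ m / m) * z ^ m)‖ ≤
      Real.exp ((3 ^ p / p + n * 2 ^ p) * ‖z‖ ^ p) := by
  have hsum : ∑ m ∈ Icc 1 n, ‖z‖ ^ m ≤ n * (2 ^ p * ‖z‖ ^ p) := by
    simpa using sum_le_card_nsmul (Icc 1 n) _ _ fun m hm =>
      pow_le_two_rpow_mul_rpow hz (le_trans (by exact_mod_cast (mem_Icc.mp hm).2) hp)
  calc ‖(1 + z) * exp (∑ m ∈ Icc 1 n, ((-1 : ℂ) ^ m / m) * z ^ m)‖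
      ≤ Real.exp (Real.log (1 + ‖z‖)) * Real.exp (∑ m ∈ Icc 1 n, ‖z‖ ^ m) := by
        rw [norm_mul, Real.exp_log (by positivity)]
        gcongr
        · exact (norm_add_le _ _).trans_eq (by rw [norm_one])
        · exact (norm_exp_le_exp_norm _).trans
            (Real.exp_le_exp.mpr (norm_sum_Icc_neg_one_pow_div_mul_pow_le n z))
    _ ≤ Real.exp ((3 ^ p / p + n * 2 ^ p) * ‖z‖ ^ p) := by
        rw [← Real.exp_add]
        gcongr
        linarith [log_one_add_le_rpow hz hp0]

theorem regularized_det_scalar_bound_general (n : ℕ) (p : ℝ)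
    (hp1 : (n : ℝ) - 1 ≤ p) (hp2 : p ≤ n) (hp0 : 0 < p) :
    ∃ Γ : ℝ, 0 ≤ Γ ∧ ∀ z : ℂ,
      ‖(1 + z) *
          Complex.exp (∑ m ∈ Finset.Icc 1 (n - 1), ((-1 : ℂ) ^ m / m) * z ^ m)‖ ≤
        Real.exp (Γ * ‖z‖ ^ p) := by
  obtain ⟨k, rfl⟩ : ∃ k, n = k + 1 :=
    Nat.exists_eq_add_one.mpr (by exact_mod_cast hp0.trans_le hp2)
  have hC : 0 ≤ 3 ^ p / p + k * 2 ^ p := by positivity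
  refine ⟨2 + (3 ^ p / p + k * 2 ^ p), by positivity, fun z => ?_⟩
  have hzp : 0 ≤ ‖z‖ ^ p := by positivity
  rcases le_or_gt ‖z‖ (1 / 2) with hz | hz
  · rw [sum_Icc_neg_one_pow_div_mul_pow_eq_neg_logTaylor]
    refine (norm_one_add_mul_exp_neg_logTaylor_le_of_norm_le_half k hz).trans
      (Real.exp_le_exp.mpr ?_)
    have hpow : ‖z‖ ^ (k + 1) ≤ ‖z‖ ^ p := by
      rw [← Real.rpow_natCast]
      exact Real.rpow_le_rpow_of_exponent_ge' (norm_nonneg z) (by linarith) hp0.le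
        (by exact_mod_cast hp2)
    linarith [mul_nonneg hC hzp]
  · push_cast at hp1
    rw [Nat.add_sub_cancel]
    refine (norm_one_add_mul_exp_sum_Icc_le_of_half_le_norm hp0 (by linarith) hz.le).trans
      (Real.exp_le_exp.mpr ?_)
    linarith

/-- The scalar inequality underlying the bound `ln|det_n(1+K)| ≤ Γ_{n,p} ‖K‖_p^p` for
`n`-th order regularized determinants: for `n - 1 ≤ p ≤ n`, `p > 0`, there is `Γ ≥ 0`
with `|(1+z) exp(∑_{m=1}^{n-1} ((-1)^m/m) z^m)| ≤ exp(Γ |z|^p)` for all `z ∈ ℂ`. -/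
theorem regularized_det_scalar_bound (n : ℕ) (hn : 1 ≤ n) (p : ℝ)
    (hp1 : (n : ℝ) - 1 ≤ p) (hp2 : p ≤ n) (hp0 : 0 < p) :
    ∃ Γ : ℝ, 0 ≤ Γ ∧ ∀ z : ℂ,
      ‖(1 + z) *
          Complex.exp (∑ m ∈ Finset.Icc 1 (n - 1), ((-1 : ℂ) ^ m / m) * z ^ m)‖ ≤
        Real.exp (Γ * ‖z‖ ^ p) :=
  regularized_det_scalar_bound_general n p hp1 hp2 hp0
end

section
/- For every z ∈ ℂ, |(1 + z) e^{−z}| ≤ e^{|z|²/2}. -/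
/-!
Since `‖1 + z‖² = 1 + (2 Re z + ‖z‖²) ≤ exp (2 Re z + ‖z‖²)`, we get
`‖1 + z‖ ≤ exp (Re z + ‖z‖² / 2)`, and the factor `‖e^{-z}‖ = exp (-Re z)` cancels `Re z`.
-/

namespace Complex

theorem sq_norm_one_add (z : ℂ) : ‖1 + z‖ ^ 2 = 1 + 2 * z.re + ‖z‖ ^ 2 := by
  simp only [Complex.sq_norm, normSq_apply, add_re, add_im, one_re, one_im]
  ring

theorem norm_one_add_le_exp (z : ℂ) : ‖1 + z‖ ≤ Real.exp (z.re + ‖z‖ ^ 2 / 2) := by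
  have hsq : ‖1 + z‖ ^ 2 ≤ Real.exp (z.re + ‖z‖ ^ 2 / 2) ^ 2 := by
    calc ‖1 + z‖ ^ 2 = 1 + 2 * z.re + ‖z‖ ^ 2 := sq_norm_one_add z
      _ ≤ Real.exp (2 * z.re + ‖z‖ ^ 2) := by
        linarith [Real.add_one_le_exp (2 * z.re + ‖z‖ ^ 2)]
      _ = Real.exp (z.re + ‖z‖ ^ 2 / 2) ^ 2 := by
        rw [← Real.exp_nat_mul]
        ring_nf
  exact (pow_le_pow_iff_left₀ (norm_nonneg _) (Real.exp_nonneg _) two_ne_zero).1 hsq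

end Complex

/-- The scalar inequality `|(1+z) e^{-z}| ≤ e^{|z|²/2}` underlying the value
`Γ_{2,2} = 1/2` for second-order regularized determinants. -/
theorem abs_one_add_mul_exp_neg_le (z : ℂ) :
    ‖(1 + z) * Complex.exp (-z)‖ ≤ Real.exp (‖z‖ ^ 2 / 2) := by
  rw [norm_mul, Complex.norm_exp, Complex.neg_re]
  calc ‖1 + z‖ * Real.exp (-z.re)
      ≤ Real.exp (z.re + ‖z‖ ^ 2 / 2) * Real.exp (-z.re) := by
        gcongr
        exact Complex.norm_one_add_le_exp z
    _ = Real.exp (‖z‖ ^ 2 / 2) := by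
        rw [← Real.exp_add]
        ring_nf
end
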